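/- The distance Laplacian spectrum of the graph K_2 ∨ (K_{(n-2)/2} ∪ K_{(n-2)/2}) (the join of an edge with two disjoint cliques of size (n-2)/2), for even n ≥ 6, is: 2n - 2 with multiplicity 1, (3n-2)/2 with multiplicity n - 4, n with multiplicity 2, and 0 with multiplicity 1. -/

import Mathlib

/-!
Vertex `0` is adjacent to all others, so the diameter is at most 2, and for such graphs
`D^L = n I - J + L(Gᶜ)`. Here `Gᶜ` is `K_{m,m}` plus two isolated vertices, `m = (n - 2) / 2`.
The all-ones vector lies in the kernel of `D^L`, and every vector `x` with `∑ x = 0` and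
`L(Gᶜ) x = λ x` is an eigenvector for `n + λ`. This gives eigenspaces of dimension at least
`1, n - 4, 2` for `2n - 2 = n + 2m`, `(3n - 2)/2 = n + m` and `n`: the one for `n + m` contains
every vector vanishing on the two dominating vertices and summing to zero on each clique. These
lower bounds and the `1` for eigenvalue `0` add up to `n`, and eigenspaces for distinct
eigenvalues are independent, so all bounds are equalities and there are no other eigenvalues.
-/

open Matrix

/-- The transmission of a vertex: sum of distances to all other vertices. -/
noncomputable def transmission {V : Type*} [Fintype V] (G : SimpleGraph V) (v : V) : ℕ :=
  ∑ u, G.dist v u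

/-- The distance Laplacian matrix `D^L(G) = Diag(Tr) - D(G)`. -/
noncomputable def distLapMatrix {V : Type*} [Fintype V] [DecidableEq V]
    (G : SimpleGraph V) : Matrix V V ℝ :=
  fun u v => if u = v then (transmission G u : ℝ) else -(G.dist u v : ℝ)

/-- `μ` is an eigenvalue of the real matrix `M`. -/
def IsEigenvalue {V : Type*} [Fintype V] [DecidableEq V] (M : Matrix V V ℝ) (μ : ℝ) : Prop :=
  Module.End.HasEigenvalue (Matrix.toLin' M) μ

/-- The multiplicity of `μ` as an eigenvalue of `M` (dimension of the eigenspace). -/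
noncomputable def eigMult {V : Type*} [Fintype V] [DecidableEq V]
    (M : Matrix V V ℝ) (μ : ℝ) : ℕ :=
  Module.finrank ℝ (Module.End.eigenspace (Matrix.toLin' M) μ)

/-- The join `K_2 ∨ (K_m ∪ K_m)` on `Fin n` with `m = (n-2)/2`: vertices `0,1` are joined to
everything; the remaining vertices split into two cliques of size `m`. -/
def joinTwoCliques (n : ℕ) : SimpleGraph (Fin n) :=
  SimpleGraph.fromRel (fun u v =>
    u.val < 2 ∨ v.val < 2 ∨ (u.val < 2 + (n - 2) / 2 ↔ v.val < 2 + (n - 2) / 2))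

open Module Finset

namespace Submodule
variable {K V : Type*} [DivisionRing K] [AddCommGroup V] [Module K V] [FiniteDimensional K V]

theorem finrank_biSup_eq_sum {ι : Type*} {p : ι → Submodule K V} (hp : iSupIndep p)
    (s : Finset ι) : finrank K ↥(⨆ i ∈ s, p i) = ∑ i ∈ s, finrank K (p i) := by
  classical
  induction s using Finset.induction_on with
  | empty => simp
  | insert a s ha ih =>
    have hdisj : Disjoint (p a) (⨆ i ∈ s, p i) := hp.disjoint_biSup (by simpa using ha)
    have hsum := finrank_sup_add_finrank_inf_eq (p a) (⨆ i ∈ s, p i)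
    rw [hdisj.eq_bot, finrank_bot, add_zero, ih] at hsum
    rw [Finset.iSup_insert, hsum, Finset.sum_insert ha]

theorem card_le_finrank_of_linearIndependent {ι : Type*} [Fintype ι] (p : Submodule K V)
    {v : ι → V} (hv : LinearIndependent K v) (hvp : ∀ i, v i ∈ p) :
    Fintype.card ι ≤ finrank K p :=
  LinearIndependent.fintype_card_le_finrank (b := fun i => (⟨v i, hvp i⟩ : p))
    (.of_comp p.subtype hv)

end Submodule

namespace Module.End
variable {K V : Type*} [Field K] [AddCommGroup V] [Module K V] [FiniteDimensional K V]

theorem sum_finrank_eigenspace_le (f : End K V) (s : Finset K) :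
    ∑ μ ∈ s, finrank K (f.eigenspace μ) ≤ finrank K V := by
  rw [← Submodule.finrank_biSup_eq_sum f.eigenspaces_iSupIndep]
  exact Submodule.finrank_le _

theorem finrank_eigenspace_eq_of_sum_eq {ι : Type*} [Fintype ι] (f : End K V) {μ : ι → K}
    (hμ : Function.Injective μ) {d : ι → ℕ} (hd : ∀ i, d i ≤ finrank K (f.eigenspace (μ i)))
    (hsum : ∑ i, d i = finrank K V) :
    (∀ i, finrank K (f.eigenspace (μ i)) = d i) ∧ ∀ ν, f.HasEigenvalue ν → ν ∈ Set.range μ := by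
  classical
  have hle : ∑ i, finrank K (f.eigenspace (μ i)) ≤ finrank K V := by
    have h := sum_finrank_eigenspace_le f (univ.image μ)
    rwa [Finset.sum_image hμ.injOn] at h
  refine ⟨fun i => ((Finset.sum_eq_sum_iff_of_le fun i _ => hd i).mp ?_ i (mem_univ i)).symm,
    fun ν hν => ?_⟩
  · exact le_antisymm (Finset.sum_le_sum fun i _ => hd i) (hsum ▸ hle)
  · by_contra hν'
    have hnot : ν ∉ univ.image μ := by simpa using hν'
    have htot := sum_finrank_eigenspace_le f (insert ν (univ.image μ))
    rw [Finset.sum_insert hnot, Finset.sum_image hμ.injOn] at htot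
    have hpos := Submodule.one_le_finrank_iff.mpr (hasEigenvalue_iff.mp hν)
    have := Finset.sum_le_sum fun i (_ : i ∈ univ) => hd i
    omega

end Module.End

section eigMult
variable {V : Type*} [Fintype V] [DecidableEq V] {M : Matrix V V ℝ} {μ : ℝ}

theorem mem_eigenspace_toLin'_iff {x : V → ℝ} :
    x ∈ Module.End.eigenspace (toLin' M) μ ↔ M *ᵥ x = μ • x := by
  rw [Module.End.mem_eigenspace_iff, toLin'_apply]

theorem one_le_eigMult {x : V → ℝ} (hx : x ≠ 0) (h : M *ᵥ x = μ • x) : 1 ≤ eigMult M μ :=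
  Submodule.one_le_finrank_iff.mpr
    ((Submodule.ne_bot_iff _).mpr ⟨x, mem_eigenspace_toLin'_iff.mpr h, hx⟩)

theorem card_le_eigMult {ι : Type*} [Fintype ι] {v : ι → V → ℝ} (hv : LinearIndependent ℝ v)
    (h : ∀ i, M *ᵥ v i = μ • v i) : Fintype.card ι ≤ eigMult M μ :=
  Submodule.card_le_finrank_of_linearIndependent _ hv fun i => mem_eigenspace_toLin'_iff.mpr (h i)

theorem finrank_le_eigMult {p : Submodule ℝ (V → ℝ)} (h : ∀ x ∈ p, M *ᵥ x = μ • x) :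
    finrank ℝ p ≤ eigMult M μ :=
  Submodule.finrank_mono fun x hx => mem_eigenspace_toLin'_iff.mpr (h x hx)

end eigMult

namespace SimpleGraph
variable {V : Type*} {G : SimpleGraph V}

theorem ediam_le_two_of_eccent_le_one {w : V} (hw : G.eccent w ≤ 1) : G.ediam ≤ 2 :=
  ediam_le_of_edist_le fun u v => calc
    G.edist u v ≤ G.edist w u + G.edist w v := edist_comm (u := w) ▸ G.edist_triangle
    _ ≤ 1 + 1 := add_le_add (edist_le_eccent.trans hw) (edist_le_eccent.trans hw)
    _ = 2 := one_add_one_eq_two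

variable [DecidableEq V] [DecidableRel G.Adj]

theorem dist_eq_of_ediam_le_two (hG : G.ediam ≤ 2) (u v : V) :
    G.dist u v = (if u = v then 0 else 1) + (if Gᶜ.Adj u v then 1 else 0) := by
  by_cases huv : u = v
  · simp [huv]
  by_cases hadj : G.Adj u v
  · simp [huv, hadj, dist_eq_one_iff_adj.mpr hadj]
  have hle : G.edist u v ≤ 2 := edist_le_ediam.trans hG
  have hr : G.Reachable u v := reachable_of_edist_ne_top (ne_top_of_le_ne_top (by simp) hle)
  have hlt := hr.one_lt_dist_of_ne_of_not_adj huv hadj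
  have hle' : G.dist u v ≤ 2 := by exact_mod_cast hr.coe_dist_eq_edist ▸ hle
  simp only [huv, compl_adj, hadj, if_false, ne_eq, not_false_eq_true, and_self, if_true]
  omega

variable [Fintype V]

theorem transmission_eq_of_ediam_le_two (hG : G.ediam ≤ 2) (u : V) :
    transmission G u = (Fintype.card V - 1) + Gᶜ.degree u := by
  simp only [transmission, dist_eq_of_ediam_le_two hG, sum_add_distrib]
  rw [sum_boole, ← neighborFinset_eq_filter, card_neighborFinset_eq_degree]
  simp [Finset.sum_ite, Finset.filter_ne, Finset.card_univ]

theorem distLapMatrix_eq_of_ediam_le_two (hG : G.ediam ≤ 2) :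
    distLapMatrix G = (Fintype.card V : ℝ) • 1 - Matrix.of (fun _ _ => 1) + Gᶜ.lapMatrix ℝ := by
  ext u v
  rcases eq_or_ne u v with rfl | huv
  · simp [distLapMatrix, lapMatrix, degMatrix, transmission_eq_of_ediam_le_two hG,
      Nat.cast_sub (Fintype.card_pos_iff.mpr ⟨u⟩)]
  · by_cases hadj : G.Adj u v <;>
      norm_num [distLapMatrix, lapMatrix, degMatrix, dist_eq_of_ediam_le_two hG, huv, hadj]

theorem distLapMatrix_mulVec_eq_smul_of_ediam_le_two (hG : G.ediam ≤ 2) {x : V → ℝ}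
    (hx : ∑ v, x v = 0) {μ : ℝ} (hL : Gᶜ.lapMatrix ℝ *ᵥ x = μ • x) :
    distLapMatrix G *ᵥ x = (Fintype.card V + μ) • x := by
  rw [distLapMatrix_eq_of_ediam_le_two hG, add_mulVec, sub_mulVec, smul_mulVec, one_mulVec, hL,
    add_smul]
  congr 1
  ext v
  simp [mulVec, dotProduct, hx]

end SimpleGraph

theorem distLapMatrix_mulVec_const {V : Type*} [Fintype V] [DecidableEq V] (G : SimpleGraph V) :
    distLapMatrix G *ᵥ (fun _ => 1) = 0 := by
  ext u
  have hrow : ∀ w,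
      distLapMatrix G u w = (if u = w then (transmission G u : ℝ) else 0) - G.dist u w := by
    intro w
    rcases eq_or_ne u w with rfl | h <;> simp [distLapMatrix, *]
  simp only [mulVec, dotProduct, mul_one, hrow, sum_sub_distrib, sum_ite_eq, mem_univ, if_true,
    transmission, Nat.cast_sum, sub_self, Pi.zero_apply]

theorem one_le_eigMult_distLapMatrix_zero {V : Type*} [Fintype V] [DecidableEq V] [Nonempty V]
    (G : SimpleGraph V) : 1 ≤ eigMult (distLapMatrix G) 0 :=
  one_le_eigMult (x := fun _ => 1) (Function.const_ne_zero.mpr one_ne_zero)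
    (by rw [distLapMatrix_mulVec_const, zero_smul])

instance (n : ℕ) : DecidableRel (joinTwoCliques n).Adj :=
  inferInstanceAs (DecidableRel (SimpleGraph.fromRel _).Adj)

namespace joinTwoCliques
variable {m : ℕ}

def hub (m : ℕ) (i : Fin 2) : Fin (2 + m + m) := Fin.castAdd m (Fin.castAdd m i)
def left (m : ℕ) (i : Fin m) : Fin (2 + m + m) := Fin.castAdd m (Fin.natAdd 2 i)
def right (m : ℕ) (i : Fin m) : Fin (2 + m + m) := Fin.natAdd (2 + m) i

@[simp] theorem val_hub (i : Fin 2) : (hub m i).val = i := rfl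
@[simp] theorem val_left (i : Fin m) : (left m i).val = 2 + i := rfl
@[simp] theorem val_right (i : Fin m) : (right m i).val = 2 + m + i := rfl

@[simp] theorem hub_inj {i j : Fin 2} : hub m i = hub m j ↔ i = j := by
  simp [Fin.ext_iff]

@[simp] theorem left_ne_hub (i : Fin m) (j : Fin 2) : left m i ≠ hub m j := by
  simp only [ne_eq, Fin.ext_iff, val_left, val_hub]; omega

@[simp] theorem right_ne_hub (i : Fin m) (j : Fin 2) : right m i ≠ hub m j := by
  simp only [ne_eq, Fin.ext_iff, val_right, val_hub]; omega

theorem sum_univ {M : Type*} [AddCommMonoid M] (x : Fin (2 + m + m) → M) :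
    ∑ v, x v = ∑ i, x (hub m i) + ∑ i, x (left m i) + ∑ i, x (right m i) := by
  rw [Fin.sum_univ_add, Fin.sum_univ_add]
  rfl

theorem adj_iff (u v : Fin (2 + m + m)) :
    (joinTwoCliques (2 + m + m)).Adj u v ↔
      u ≠ v ∧ (u.val < 2 ∨ v.val < 2 ∨ (u.val < 2 + m ↔ v.val < 2 + m)) := by
  simp only [joinTwoCliques, SimpleGraph.fromRel_adj, show (2 + m + m - 2) / 2 = m by omega]
  tauto

theorem compl_adj_iff (u v : Fin (2 + m + m)) :
    (joinTwoCliques (2 + m + m))ᶜ.Adj u v ↔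
      2 ≤ u.val ∧ 2 ≤ v.val ∧ (u.val < 2 + m ↔ ¬ v.val < 2 + m) := by
  rw [SimpleGraph.compl_adj, adj_iff, ne_eq, Fin.ext_iff]
  omega

theorem ediam_le_two : (joinTwoCliques (2 + m + m)).ediam ≤ 2 := by
  refine SimpleGraph.ediam_le_two_of_eccent_le_one (w := hub m 0) ?_
  refine (SimpleGraph.eccent_le_one_iff _).mpr fun v hv => (adj_iff _ _).mpr ⟨hv, Or.inl ?_⟩
  simp

theorem not_compl_adj_hub (v : Fin (2 + m + m)) (i : Fin 2) :
    ¬(joinTwoCliques (2 + m + m))ᶜ.Adj v (hub m i) := by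
  simp only [compl_adj_iff, val_hub]; omega

theorem compl_adj_left_iff (v : Fin (2 + m + m)) (i : Fin m) :
    (joinTwoCliques (2 + m + m))ᶜ.Adj v (left m i) ↔ 2 + m ≤ v.val := by
  simp only [compl_adj_iff, val_left]; omega

theorem compl_adj_right_iff (v : Fin (2 + m + m)) (i : Fin m) :
    (joinTwoCliques (2 + m + m))ᶜ.Adj v (right m i) ↔ 2 ≤ v.val ∧ v.val < 2 + m := by
  simp only [compl_adj_iff, val_right]; omega

theorem compl_lapMatrix_mulVec_apply (x : Fin (2 + m + m) → ℝ) (v : Fin (2 + m + m)) :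
    ((joinTwoCliques (2 + m + m))ᶜ.lapMatrix ℝ *ᵥ x) v =
      if v.val < 2 then 0
      else if v.val < 2 + m then m * x v - ∑ i, x (right m i)
      else m * x v - ∑ i, x (left m i) := by
  rw [SimpleGraph.lapMatrix_mulVec_apply, SimpleGraph.degree_eq_sum_if_adj,
    SimpleGraph.neighborFinset_eq_filter, Finset.sum_filter, sum_univ, sum_univ]
  simp only [not_compl_adj_hub, compl_adj_left_iff, compl_adj_right_iff, if_false,
    Finset.sum_const_zero, Finset.sum_ite_irrel, zero_add]
  split_ifs <;> first | omega | simp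

def blockVec (m : ℕ) (a b c : ℝ) : Fin (2 + m + m) → ℝ :=
  fun v => if v.val < 2 then a else if v.val < 2 + m then b else c

@[simp] theorem blockVec_hub (a b c : ℝ) (i : Fin 2) : blockVec m a b c (hub m i) = a :=
  if_pos i.isLt

@[simp] theorem blockVec_left (a b c : ℝ) (i : Fin m) : blockVec m a b c (left m i) = b := by
  rw [blockVec, if_neg (by simp; omega), if_pos (by simp)]

@[simp] theorem blockVec_right (a b c : ℝ) (i : Fin m) : blockVec m a b c (right m i) = c := by
  rw [blockVec, if_neg (by simp; omega), if_neg (by simp)]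

theorem sum_blockVec (a b c : ℝ) : ∑ v, blockVec m a b c v = 2 * a + m * b + m * c := by
  simp [sum_univ]

theorem compl_lapMatrix_mulVec_blockVec (a b c : ℝ) :
    (joinTwoCliques (2 + m + m))ᶜ.lapMatrix ℝ *ᵥ blockVec m a b c
      = blockVec m 0 (m * (b - c)) (m * (c - b)) := by
  ext v
  rw [compl_lapMatrix_mulVec_apply]
  simp only [blockVec_left, blockVec_right, sum_const, card_univ, Fintype.card_fin, nsmul_eq_mul]
  simp only [blockVec]
  split_ifs <;> ring

theorem smul_blockVec (r a b c : ℝ) :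
    r • blockVec m a b c = blockVec m (r * a) (r * b) (r * c) := by
  ext v
  simp only [blockVec, Pi.smul_apply, smul_eq_mul]
  split_ifs <;> rfl

theorem distLapMatrix_mulVec_eq_smul {x : Fin (2 + m + m) → ℝ} (hx : ∑ v, x v = 0) {μ : ℝ}
    (hL : (joinTwoCliques (2 + m + m))ᶜ.lapMatrix ℝ *ᵥ x = μ • x) :
    distLapMatrix (joinTwoCliques (2 + m + m)) *ᵥ x = (2 + m + m + μ : ℝ) • x := by
  simpa using SimpleGraph.distLapMatrix_mulVec_eq_smul_of_ediam_le_two ediam_le_two hx hL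

theorem mulVec_blockVec_cliques :
    distLapMatrix (joinTwoCliques (2 + m + m)) *ᵥ blockVec m 0 1 (-1)
      = (2 + m + m + 2 * m : ℝ) • blockVec m 0 1 (-1) := by
  refine distLapMatrix_mulVec_eq_smul (by simp [sum_blockVec]) ?_
  rw [compl_lapMatrix_mulVec_blockVec, smul_blockVec]
  congr 1 <;> ring

theorem mulVec_blockVec_hub :
    distLapMatrix (joinTwoCliques (2 + m + m)) *ᵥ blockVec m m (-1) (-1)
      = (2 + m + m : ℝ) • blockVec m m (-1) (-1) := by
  rw [← add_zero (2 + m + m : ℝ)]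
  refine distLapMatrix_mulVec_eq_smul (by simp [sum_blockVec]; ring) ?_
  rw [compl_lapMatrix_mulVec_blockVec, smul_blockVec]
  congr 1 <;> ring

theorem mulVec_hubDiff :
    distLapMatrix (joinTwoCliques (2 + m + m)) *ᵥ (Pi.single (hub m 0) 1 - Pi.single (hub m 1) 1)
      = (2 + m + m : ℝ) • (Pi.single (hub m 0) 1 - Pi.single (hub m 1) 1) := by
  rw [← add_zero (2 + m + m : ℝ)]
  refine distLapMatrix_mulVec_eq_smul (by simp [sum_sub_distrib]) ?_
  ext v
  rw [compl_lapMatrix_mulVec_apply]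
  by_cases hv : v.val < 2
  · simp [hv]
  · have : v ≠ hub m 0 ∧ v ≠ hub m 1 := by simp only [ne_eq, Fin.ext_iff, val_hub]; omega
    simp [hv, this]

def hubCliqueSums (m : ℕ) : (Fin (2 + m + m) → ℝ) →ₗ[ℝ] (Fin 4 → ℝ) :=
  LinearMap.pi ![LinearMap.proj (hub m 0), LinearMap.proj (hub m 1),
    ∑ i, LinearMap.proj (left m i), ∑ i, LinearMap.proj (right m i)]

theorem mulVec_of_mem_ker_hubCliqueSums {x : Fin (2 + m + m) → ℝ}
    (hx : x ∈ LinearMap.ker (hubCliqueSums m)) :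
    distLapMatrix (joinTwoCliques (2 + m + m)) *ᵥ x = (2 + m + m + m : ℝ) • x := by
  have h := LinearMap.mem_ker.mp hx
  have hhub : ∀ j : Fin 2, x (hub m j) = 0 := by
    intro j; fin_cases j
    · simpa [hubCliqueSums] using congrFun h 0
    · simpa [hubCliqueSums] using congrFun h 1
  have hleft : ∑ i, x (left m i) = 0 := by simpa [hubCliqueSums] using congrFun h 2
  have hright : ∑ i, x (right m i) = 0 := by simpa [hubCliqueSums] using congrFun h 3
  refine distLapMatrix_mulVec_eq_smul (by simp [sum_univ, hhub, hleft, hright]) ?_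
  ext v
  rw [compl_lapMatrix_mulVec_apply, hleft, hright]
  split_ifs with hv
  · obtain ⟨j, rfl⟩ : ∃ j, v = hub m j := ⟨⟨v, hv⟩, rfl⟩
    simp [hhub]
  all_goals simp

theorem two_mul_sub_two_le_eigMult_add :
    2 * m - 2 ≤ eigMult (distLapMatrix (joinTwoCliques (2 + m + m))) (2 + m + m + m) := by
  refine le_trans ?_ (finrank_le_eigMult fun x hx => mulVec_of_mem_ker_hubCliqueSums hx)
  have hrank := LinearMap.finrank_range_add_finrank_ker (hubCliqueSums m)
  have hrange := Submodule.finrank_le (LinearMap.range (hubCliqueSums m))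
  simp only [Module.finrank_fin_fun] at hrank hrange
  omega

theorem one_le_eigMult_add_two_mul (hm : 0 < m) :
    1 ≤ eigMult (distLapMatrix (joinTwoCliques (2 + m + m))) (2 + m + m + 2 * m) := by
  refine one_le_eigMult (fun h => ?_) mulVec_blockVec_cliques
  simpa using congrFun h (left m ⟨0, hm⟩)

theorem two_le_eigMult (hm : 0 < m) :
    2 ≤ eigMult (distLapMatrix (joinTwoCliques (2 + m + m))) (2 + m + m) := by
  refine card_le_eigMult (v := ![Pi.single (hub m 0) 1 - Pi.single (hub m 1) 1,
    blockVec m m (-1) (-1)]) (LinearIndependent.pair_iff.mpr fun s t hst => ?_) ?_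
  · have ht : t = 0 := by simpa using congrFun hst (left m ⟨0, hm⟩)
    have hs : s + t * m = 0 := by simpa using congrFun hst (hub m 0)
    exact ⟨by simpa [ht] using hs, ht⟩
  · intro i; fin_cases i
    · exact mulVec_hubDiff
    · exact mulVec_blockVec_hub

end joinTwoCliques

/-- The distance Laplacian spectrum of `K_2 ∨ (K_{(n-2)/2} ∪ K_{(n-2)/2})`, for even
`n ≥ 6`, is `2n-2` with multiplicity `1`, `(3n-2)/2` with multiplicity `n-4`, `n` with
multiplicity `2`, and `0` with multiplicity `1`. -/
theorem stmt_19 (n : ℕ) (hn : 6 ≤ n) (hev : 2 ∣ n)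
    (M : Matrix (Fin n) (Fin n) ℝ) (hM : M = distLapMatrix (joinTwoCliques n)) :
    eigMult M (2 * (n : ℝ) - 2) = 1 ∧
    eigMult M ((3 * (n : ℝ) - 2) / 2) = n - 4 ∧
    eigMult M (n : ℝ) = 2 ∧
    eigMult M 0 = 1 ∧
    (∀ μ : ℝ, IsEigenvalue M μ →
      μ = 0 ∨ μ = (n : ℝ) ∨ μ = (3 * (n : ℝ) - 2) / 2 ∨ μ = 2 * (n : ℝ) - 2) := by
  obtain ⟨m, rfl⟩ : ∃ m, n = 2 + m + m := ⟨n / 2 - 1, by omega⟩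
  subst hM
  have hm : 0 < m := by omega
  have hmR : (0 : ℝ) < m := by exact_mod_cast hm
  have hcast : ((2 + m + m : ℕ) : ℝ) = 2 + m + m := by push_cast; ring
  rw [hcast, show 2 + m + m - 4 = 2 * m - 2 by omega,
    show 2 * (2 + m + m : ℝ) - 2 = 2 + m + m + 2 * m by ring,
    show (3 * (2 + m + m : ℝ) - 2) / 2 = 2 + m + m + m by ring]
  obtain ⟨hmult, hspec⟩ := Module.End.finrank_eigenspace_eq_of_sum_eq
    (toLin' (distLapMatrix (joinTwoCliques (2 + m + m))))
    (μ := ![2 + m + m + 2 * m, 2 + m + m + m, 2 + m + m, 0]) (d := ![1, 2 * m - 2, 2, 1])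
    (Fin.strictAnti_iff_succ_lt.mpr fun i => by fin_cases i <;> simp <;> linarith).injective
    (fun i => by
      fin_cases i
      · exact joinTwoCliques.one_le_eigMult_add_two_mul hm
      · exact joinTwoCliques.two_mul_sub_two_le_eigMult_add
      · exact joinTwoCliques.two_le_eigMult hm
      · exact one_le_eigMult_distLapMatrix_zero _)
    (by
      simp only [Fin.sum_univ_four, cons_val_zero, cons_val_one, Matrix.cons_val,
        finrank_fintype_fun_eq_card, Fintype.card_fin]
      omega)
  refine ⟨hmult 0, hmult 1, hmult 2, hmult 3, fun μ hμ => ?_⟩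
  obtain ⟨i, rfl⟩ := hspec μ hμ
  fin_cases i <;> simp
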